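/- arXiv:2312.09975 — 3 statements merged into one kernel-verified Lean document; each statement's English description precedes it below -/
import Mathlib

section
/- (Welch bound, equality characterization) Let d and n be positive integers with n > d, let F ∈ ℂ^{d×n} have unit-norm columns f_1,…,f_n, and set μ := √((n−d)/(d(n−1))). Then max_{i≠j} |f_i* f_j| = μ if and only if both: (i) |f_i* f_j| = μ for all 1 ≤ i ≠ j ≤ n, and (ii) F F* = (n/d)·I. -/
open Matrix

/-- The Welch bound. -/
noncomputable def etfMu (d n : ℕ) : ℝ :=
  Real.sqrt (((n : ℝ) - d) / (d * ((n : ℝ) - 1)))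

/-- Equiangular tight frame. -/
def IsETF {ι κ : Type} [Fintype ι] [Fintype κ] [DecidableEq ι] [DecidableEq κ]
    (F : Matrix ι κ ℂ) : Prop :=
  (∀ j, (Fᴴ * F) j j = 1) ∧
  (∀ j k : κ, j ≠ k →
    ‖(Fᴴ * F) j k‖ = etfMu (Fintype.card ι) (Fintype.card κ)) ∧
  F * Fᴴ = ((Fintype.card κ : ℂ) / (Fintype.card ι : ℂ)) • 1

def IsSignatureOf {ι κ : Type} [Fintype ι] [Fintype κ] [DecidableEq ι] [DecidableEq κ]
    (S : Matrix κ κ ℂ) (F : Matrix ι κ ℂ) : Prop :=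
  IsETF F ∧ S = ((etfMu (Fintype.card ι) (Fintype.card κ) : ℝ) : ℂ)⁻¹ • (Fᴴ * F - 1)

def IsHadamard {ι : Type} [Fintype ι] [DecidableEq ι] (H : Matrix ι ι ℝ) : Prop :=
  (∀ i j, H i j = 1 ∨ H i j = -1) ∧ Hᵀ * H = (Fintype.card ι : ℝ) • 1

def IsSkewHadamard {ι : Type} [Fintype ι] [DecidableEq ι] (H : Matrix ι ι ℝ) : Prop :=
  _root_.IsHadamard H ∧ (H - 1)ᵀ = -(H - 1)

/-!
Write `G = Fᴴ F` (Gram matrix, unit diagonal, so `tr G = n`) and `A = F Fᴴ` (frame operator, `d × d`).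
Since `tr A = tr G` and `tr A² = tr G²`, expanding the Frobenius norm gives the Welch identity
`∑_{i ≠ j} |G i j|² = n²/d - n + ‖A - (n/d) I‖²_F`, and `n²/d - n = n (n - 1) μ²`.
If every `|G i j|` with `i ≠ j` is at most `μ`, the left side is at most `n (n - 1) μ²`, so the
Frobenius term vanishes and each off-diagonal bound is attained.
-/

lemma Finset.sum_sum_eq_sum_offDiag_add_sum_diag {ι M : Type*} [DecidableEq ι]
    [AddCommMonoid M] (s : Finset ι) (f : ι → ι → M) :
    ∑ i ∈ s, ∑ j ∈ s, f i j = ∑ p ∈ s.offDiag, f p.1 p.2 + ∑ i ∈ s, f i i := by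
  rw [← Finset.sum_product' (f := f), ← Finset.diag_union_offDiag, add_comm,
    Finset.sum_union (Finset.disjoint_diag_offDiag s), Finset.sum_diag]

lemma etfMu_sq_mul {d n : ℕ} (hd : 0 < d) (hdn : d ≤ n) (hn : 1 < n) :
    (n * (n - 1) : ℝ) * etfMu d n ^ 2 = n ^ 2 / d - n := by
  have hn' : (1 : ℝ) < n := by exact_mod_cast hn
  have hdn' : (d : ℝ) ≤ n := by exact_mod_cast hdn
  have hn1 : (n : ℝ) - 1 ≠ 0 := by linarith
  rw [etfMu, Real.sq_sqrt (div_nonneg (by linarith) (by positivity))]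
  field_simp

namespace Matrix

lemma trace_mul_sq_comm {m n R : Type*} [Fintype m] [Fintype n] [CommSemiring R]
    (A : Matrix m n R) (B : Matrix n m R) : (A * B * (A * B)).trace = (B * A * (B * A)).trace := by
  rw [← Matrix.mul_assoc, trace_mul_comm]
  simp only [Matrix.mul_assoc]

variable {m n 𝕜 : Type*} [Fintype m] [Fintype n] [RCLike 𝕜]

lemma trace_conjTranspose_mul_self_eq_sum_norm_sq (A : Matrix m n 𝕜) :
    (Aᴴ * A).trace = ((∑ i, ∑ j, ‖A i j‖ ^ 2 : ℝ) : 𝕜) := by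
  simp only [trace, diag_apply, mul_apply, conjTranspose_apply, RCLike.star_def, RCLike.conj_mul]
  push_cast
  exact Finset.sum_comm

lemma sum_norm_sq_mul_conjTranspose_sub_smul_one [DecidableEq m] (F : Matrix m n 𝕜) (c : ℝ) :
    ∑ i, ∑ j, ‖(F * Fᴴ - (c : 𝕜) • (1 : Matrix m m 𝕜)) i j‖ ^ 2 =
      ∑ i, ∑ j, ‖(Fᴴ * F) i j‖ ^ 2 - 2 * c * ∑ i, ∑ j, ‖F i j‖ ^ 2 + c ^ 2 * Fintype.card m := by
  set A := F * Fᴴ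
  have hA : (A - (c : 𝕜) • 1)ᴴ = A - (c : 𝕜) • 1 := by
    simp [A, conjTranspose_mul]
  apply RCLike.ofReal_injective (K := 𝕜)
  simp only [RCLike.ofReal_add, RCLike.ofReal_sub, RCLike.ofReal_mul, RCLike.ofReal_pow,
    RCLike.ofReal_ofNat, RCLike.ofReal_natCast, ← trace_conjTranspose_mul_self_eq_sum_norm_sq]
  rw [hA, (isHermitian_conjTranspose_mul_self F).eq, ← trace_mul_sq_comm, trace_mul_comm Fᴴ]
  simp only [sub_mul, mul_sub, Matrix.smul_mul, Matrix.mul_smul, Matrix.one_mul, Matrix.mul_one,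
    smul_smul, trace_sub, trace_smul, trace_one, smul_eq_mul, A]
  ring

lemma sum_offDiag_norm_sq_conjTranspose_mul_self [DecidableEq m] [DecidableEq n]
    (F : Matrix m n 𝕜) (hunit : ∀ j, (Fᴴ * F) j j = 1) (hm : Fintype.card m ≠ 0) :
    ∑ p ∈ Finset.univ.offDiag, ‖(Fᴴ * F) p.1 p.2‖ ^ 2 =
      (Fintype.card n : ℝ) ^ 2 / Fintype.card m - Fintype.card n +
        ∑ i, ∑ j,
          ‖(F * Fᴴ - ((Fintype.card n / Fintype.card m : ℝ) : 𝕜) • (1 : Matrix m m 𝕜)) i j‖ ^ 2 := by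
  have hF : ∑ i, ∑ j, ‖F i j‖ ^ 2 = Fintype.card n := by
    apply RCLike.ofReal_injective (K := 𝕜)
    rw [← trace_conjTranspose_mul_self_eq_sum_norm_sq]
    simp [trace, hunit]
  rw [sum_norm_sq_mul_conjTranspose_sub_smul_one, hF,
    Finset.sum_sum_eq_sum_offDiag_add_sum_diag]
  simp only [hunit, norm_one, one_pow, Finset.sum_const, Finset.card_univ, nsmul_eq_mul, mul_one]
  field_simp
  ring

end Matrix

open ComplexOrder in
lemma isETF_of_norm_le_etfMu {ι κ : Type} [Fintype ι] [Fintype κ] [DecidableEq ι]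
    [DecidableEq κ] (F : Matrix ι κ ℂ) (hunit : ∀ j, (Fᴴ * F) j j = 1)
    (hd : 0 < Fintype.card ι) (hdn : Fintype.card ι < Fintype.card κ)
    (hle : ∀ j k, j ≠ k → ‖(Fᴴ * F) j k‖ ≤ etfMu (Fintype.card ι) (Fintype.card κ)) :
    IsETF F := by
  set μ := etfMu (Fintype.card ι) (Fintype.card κ)
  have hsq : ∀ p ∈ Finset.univ.offDiag, ‖(Fᴴ * F) p.1 p.2‖ ^ 2 ≤ μ ^ 2 := fun p hp =>
    pow_le_pow_left₀ (norm_nonneg _) (hle _ _ (Finset.mem_offDiag.mp hp).2.2) 2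
  have hμ : ∑ _p ∈ (Finset.univ : Finset κ).offDiag, μ ^ 2 =
      (Fintype.card κ : ℝ) ^ 2 / Fintype.card ι - Fintype.card κ := by
    rw [Finset.sum_const, Finset.offDiag_card, nsmul_eq_mul, Finset.card_univ,
      ← etfMu_sq_mul hd hdn.le ((Nat.succ_le_of_lt hd).trans_lt hdn),
      Nat.cast_sub (Nat.le_mul_self _)]
    push_cast
    ring
  have hwelch := sum_offDiag_norm_sq_conjTranspose_mul_self F hunit hd.ne'
  generalize hB : F * Fᴴ - (_ : ℂ) • (1 : Matrix ι ι ℂ) = B at hwelch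
  have hB_nonneg : 0 ≤ ∑ i, ∑ j, ‖B i j‖ ^ 2 := by positivity
  have hoff := Finset.sum_le_sum hsq
  refine ⟨hunit, fun j k hjk => ?_, ?_⟩
  · have heq := (Finset.sum_eq_sum_iff_of_le hsq).mp (by linarith) (j, k)
      (Finset.mem_offDiag.mpr ⟨Finset.mem_univ _, Finset.mem_univ _, hjk⟩)
    exact (pow_left_inj₀ (norm_nonneg _) (Real.sqrt_nonneg _) two_ne_zero).mp heq
  · have hB0 : B = 0 := by
      rw [← trace_conjTranspose_mul_self_eq_zero_iff, trace_conjTranspose_mul_self_eq_sum_norm_sq,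
        show ∑ i, ∑ j, ‖B i j‖ ^ 2 = 0 by linarith, RCLike.ofReal_zero]
    rw [hB0, sub_eq_zero] at hB
    rw [hB]
    push_cast
    rfl

/-- **Welch bound (equality characterization).** For `n > d ≥ 1` and `F ∈ ℂ^{d×n}` with
unit-norm columns, the coherence `max_{i≠j} |fᵢ* fⱼ|` equals `μ = √((n−d)/(d(n−1)))`
(i.e. `μ` is the greatest value among `|fᵢ* fⱼ|`, `i ≠ j`) if and only if
(i) `|fᵢ* fⱼ| = μ` for all `i ≠ j`, and (ii) `F Fᴴ = (n/d) I`. -/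
theorem welch_bound_equality (d n : ℕ) (hd : 0 < d) (hdn : d < n)
    (F : Matrix (Fin d) (Fin n) ℂ)
    (hunit : ∀ j, (Fᴴ * F) j j = 1) :
    IsGreatest {x : ℝ | ∃ i j : Fin n, i ≠ j ∧ x = ‖(Fᴴ * F) i j‖}
      (Real.sqrt (((n : ℝ) - d) / (d * ((n : ℝ) - 1)))) ↔
    ((∀ i j : Fin n, i ≠ j →
        ‖(Fᴴ * F) i j‖ = Real.sqrt (((n : ℝ) - d) / (d * ((n : ℝ) - 1)))) ∧
      F * Fᴴ = ((n : ℂ) / (d : ℂ)) • 1) := by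
  constructor
  · intro h
    obtain ⟨-, hnorm, htight⟩ := isETF_of_norm_le_etfMu F hunit (by simpa) (by simpa)
      (fun i j hij => by simpa [etfMu] using h.2 ⟨i, j, hij, rfl⟩)
    simp only [Fintype.card_fin, etfMu] at hnorm htight
    exact ⟨hnorm, htight⟩
  · rintro ⟨hnorm, -⟩
    have hne : (⟨0, by omega⟩ : Fin n) ≠ ⟨1, by omega⟩ := by simp
    exact ⟨⟨_, _, hne, (hnorm _ _ hne).symm⟩, by
      rintro _ ⟨i, j, hij, rfl⟩
      exact (hnorm i j hij).le⟩
end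

section
/- If H = C + I is a skew Hadamard matrix of order m with m even and m > 2, and d = m/2, then S = i·C (viewed as a complex matrix) is the signature matrix of some equiangular tight frame of size (m/2) × m; equivalently, S is self-adjoint with zero diagonal and unimodular off-diagonal entries and satisfies S² = (m−1)·I. -/
open Matrix

/-!
With `S = iC`, the identity `Hᵀ H = (I - C)(I + C) = I - C²` makes `S` Hermitian with
`S² = (m - 1) I`. Hence `G = I + S / √(m - 1)` satisfies `G² = 2G`, so `G / 2` is an orthogonal
projection of trace `m / 2`. Writing `G / 2 = V Vᴴ` with `V` having `m / 2` orthonormal columns,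
the frame `F = √2 Vᴴ` has Gram matrix `G` and `F Fᴴ = 2 I`, and `√(m - 1)⁻¹` is exactly the
Welch bound for `m` vectors in dimension `m / 2`.
-/

namespace Matrix.IsHermitian

variable {𝕜 : Type*} [RCLike 𝕜] {n : Type*} [Fintype n] [DecidableEq n] {P : Matrix n n 𝕜}

lemma eigenvalues_eq_zero_or_one_of_isIdempotentElem (hP : P.IsHermitian)
    (hPP : IsIdempotentElem P) (i : n) : hP.eigenvalues i = 0 ∨ hP.eigenvalues i = 1 :=
  hPP.spectrum_subset ℝ (hP.eigenvalues_mem_spectrum_real i)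

lemma exists_mul_conjTranspose_eq_of_isIdempotentElem (hP : P.IsHermitian)
    (hPP : IsIdempotentElem P) {r : ℕ} (hr : P.trace = r) :
    ∃ V : Matrix n (Fin r) 𝕜, V * Vᴴ = P ∧ Vᴴ * V = 1 := by
  have hev := hP.eigenvalues_eq_zero_or_one_of_isIdempotentElem hPP
  have hsum (f : n → 𝕜) : ∑ i, (hP.eigenvalues i : 𝕜) * f i =
      ∑ i : {i // hP.eigenvalues i = 1}, f i := by
    rw [← Finset.sum_subtype (Finset.univ.filter fun i => hP.eigenvalues i = 1) (by simp) f,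
      Finset.sum_filter]
    refine Finset.sum_congr rfl fun i _ => ?_
    rcases hev i with h | h <;> simp [h]
  have hcard : Fintype.card {i // hP.eigenvalues i = 1} = r := by
    have := hsum 1
    simp only [Pi.one_apply, mul_one, Finset.sum_const, Finset.card_univ, nsmul_eq_mul,
      ← hP.trace_eq_sum_eigenvalues, hr] at this
    exact_mod_cast this.symm
  set U : Matrix n n 𝕜 := (hP.eigenvectorUnitary : Matrix n n 𝕜)
  have hspec : P = U * diagonal (fun i => (hP.eigenvalues i : 𝕜)) * Uᴴ := by
    simpa [Function.comp_def, star_eq_conjTranspose] using hP.spectral_theorem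
  have hUU : Uᴴ * U = 1 := Unitary.coe_star_mul_self hP.eigenvectorUnitary
  clear_value U
  -- the columns of `V` are the eigenvectors of `P` for the eigenvalue `1`
  let e : Fin r ≃ {i // hP.eigenvalues i = 1} := (Fintype.equivFinOfCardEq hcard).symm
  have he : Function.Injective (fun k => (e k : n)) := Subtype.val_injective.comp e.injective
  refine ⟨U.submatrix id (fun k => e k), ?_, ?_⟩
  · refine Eq.trans ?_ hspec.symm
    ext j j'
    simp only [mul_apply (M := U * _), mul_apply (M := U.submatrix _ _), mul_diagonal,
      submatrix_apply, conjTranspose_apply, id]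
    calc ∑ k, U j (e k) * star (U j' (e k))
        = ∑ i : {i // hP.eigenvalues i = 1}, U j i * star (U j' i) :=
          e.sum_comp fun i : {i // hP.eigenvalues i = 1} => U j i * star (U j' i)
      _ = ∑ i, (hP.eigenvalues i : 𝕜) * (U j i * star (U j' i)) :=
          (hsum fun i => U j i * star (U j' i)).symm
      _ = ∑ i, U j i * (hP.eigenvalues i : 𝕜) * star (U j' i) :=
          Finset.sum_congr rfl fun i _ => by ring
  · rw [conjTranspose_submatrix, ← submatrix_mul _ _ _ _ _ Function.bijective_id, hUU,
      submatrix_one _ he]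

end Matrix.IsHermitian

lemma etfMu_nonneg (d n : ℕ) : 0 ≤ etfMu d n := Real.sqrt_nonneg _

lemma etfMu_two_mul (d : ℕ) : etfMu d (2 * d) = (Real.sqrt (2 * d - 1))⁻¹ := by
  rcases Nat.eq_zero_or_pos d with rfl | hd
  · simp [etfMu, Real.sqrt_eq_zero_of_nonpos]
  · have hd' : (0 : ℝ) < d := by exact_mod_cast hd
    rw [etfMu, ← Real.sqrt_inv]
    congr 1
    push_cast
    field_simp
    ring

section Signature

variable {ι κ : Type} [Fintype ι] [Fintype κ] [DecidableEq ι] [DecidableEq κ]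
  {S : Matrix κ κ ℂ}

lemma isSignatureOf_of_conjTranspose_mul_eq {F : Matrix ι κ ℂ}
    (hdiag : ∀ i, S i i = 0) (hoff : ∀ i j, i ≠ j → ‖S i j‖ = 1)
    (hμ : etfMu (Fintype.card ι) (Fintype.card κ) ≠ 0)
    (hgram : Fᴴ * F = 1 + (etfMu (Fintype.card ι) (Fintype.card κ) : ℂ) • S)
    (htight : F * Fᴴ = ((Fintype.card κ : ℂ) / Fintype.card ι) • 1) :
    IsSignatureOf S F := by
  refine ⟨⟨fun j => by simp [hgram, hdiag], fun j k hjk => ?_, htight⟩, ?_⟩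
  · rw [hgram, Matrix.add_apply, one_apply_ne hjk, zero_add, Matrix.smul_apply, smul_eq_mul,
      norm_mul, Complex.norm_real, hoff j k hjk, mul_one, Real.norm_of_nonneg (etfMu_nonneg _ _)]
  · rw [hgram, add_sub_cancel_left, smul_smul, inv_mul_cancel₀ (by exact_mod_cast hμ), one_smul]

theorem exists_isSignatureOf_of_mul_self_eq {d : ℕ} (hd : 0 < d) (hκ : Fintype.card κ = 2 * d)
    (hS : S.IsHermitian) (hdiag : ∀ i, S i i = 0) (hoff : ∀ i j, i ≠ j → ‖S i j‖ = 1)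
    (hsq : S * S = ((Fintype.card κ : ℂ) - 1) • 1) :
    ∃ F : Matrix (Fin d) κ ℂ, IsSignatureOf S F := by
  rw [hκ, Nat.cast_mul, Nat.cast_ofNat] at hsq
  set μ := etfMu d (2 * d) with hμ
  have hpos : (0 : ℝ) < 2 * d - 1 := by
    have : (1 : ℝ) ≤ d := by exact_mod_cast hd
    linarith
  have hμ0 : μ ≠ 0 := by rw [hμ, etfMu_two_mul]; positivity
  have hμsq : (μ : ℂ) * μ * (2 * d - 1) = 1 := by
    rw [hμ, etfMu_two_mul, ← Complex.ofReal_mul, ← mul_inv, Real.mul_self_sqrt hpos.le]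
    push_cast
    exact inv_mul_cancel₀ (by exact_mod_cast hpos.ne')
  set P : Matrix κ κ ℂ := (2⁻¹ : ℂ) • (1 + (μ : ℂ) • S)
  have hPH : P.IsHermitian :=
    (isHermitian_one.add (hS.smul (Complex.conj_ofReal μ))).smul (by simp [IsSelfAdjoint])
  have hG : (1 + (μ : ℂ) • S) * (1 + (μ : ℂ) • S) = (2 : ℂ) • (1 + (μ : ℂ) • S) := by
    rw [add_mul, mul_add, mul_add, one_mul, mul_one, one_mul, smul_mul_smul_comm, hsq, smul_smul,
      hμsq]
    module
  have hPP : IsIdempotentElem P := by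
    rw [IsIdempotentElem, smul_mul_smul_comm, hG, smul_smul]
    congr 1
    norm_num
  have htr : P.trace = d := by
    rw [trace_smul, trace_add, trace_one, trace_smul,
      show S.trace = 0 from Finset.sum_eq_zero fun i _ => hdiag i, hκ]
    push_cast
    ring
  obtain ⟨V, hVV, hVV'⟩ := hPH.exists_mul_conjTranspose_eq_of_isIdempotentElem hPP htr
  have h2 : ((Real.sqrt 2 : ℝ) : ℂ) * ((Real.sqrt 2 : ℝ) : ℂ) = 2 := by
    rw [← Complex.ofReal_mul, Real.mul_self_sqrt zero_le_two, Complex.ofReal_ofNat]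
  refine ⟨((Real.sqrt 2 : ℝ) : ℂ) • Vᴴ, isSignatureOf_of_conjTranspose_mul_eq hdiag hoff ?_ ?_ ?_⟩
    <;> simp only [Fintype.card_fin, hκ, conjTranspose_smul, conjTranspose_conjTranspose,
      Complex.star_def, Complex.conj_ofReal, Matrix.smul_mul, Matrix.mul_smul, smul_smul, h2]
  · exact hμ0
  · rw [hVV, smul_smul, mul_inv_cancel₀ two_ne_zero, one_smul]
  · rw [hVV']
    congr 1
    push_cast
    field_simp [show (d : ℂ) ≠ 0 by exact_mod_cast hd.ne']

end Signature

lemma Matrix.isHermitian_I_smul_map_ofReal {n : Type*} {C : Matrix n n ℝ} (hC : Cᵀ = -C) :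
    (Complex.I • C.map ((↑) : ℝ → ℂ)).IsHermitian := by
  ext i j
  have hji : C j i = -C i j := by simpa using congrFun₂ hC i j
  simp [hji]

namespace IsSkewHadamard

variable {ι : Type} [Fintype ι] [DecidableEq ι] {C : Matrix ι ι ℝ}

lemma transpose_eq_neg (h : IsSkewHadamard (C + 1)) : Cᵀ = -C := by
  simpa using h.2

lemma apply_self (h : IsSkewHadamard (C + 1)) (i : ι) : C i i = 0 := by
  have := congrFun₂ h.transpose_eq_neg i i
  simp only [transpose_apply, Matrix.neg_apply] at this
  linarith

lemma apply_eq_one_or_neg_one (h : IsSkewHadamard (C + 1)) {i j : ι} (hij : i ≠ j) :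
    C i j = 1 ∨ C i j = -1 := by
  simpa [one_apply_ne hij] using h.1.1 i j

lemma mul_self (h : IsSkewHadamard (C + 1)) : C * C = (1 - Fintype.card ι : ℝ) • 1 := by
  have hH := h.1.2
  rw [transpose_add, transpose_one, h.transpose_eq_neg] at hH
  rw [sub_smul, one_smul, ← hH]
  noncomm_ring

lemma I_smul_map_ofReal_mul_self (h : IsSkewHadamard (C + 1)) :
    (Complex.I • C.map ((↑) : ℝ → ℂ)) * (Complex.I • C.map ((↑) : ℝ → ℂ)) =
      ((Fintype.card ι : ℂ) - 1) • 1 := by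
  rw [smul_mul_smul_comm, Complex.I_mul_I,
    show C.map ((↑) : ℝ → ℂ) = C.map Complex.ofRealHom from rfl, ← Matrix.map_mul, h.mul_self]
  ext i j
  by_cases hij : i = j <;> simp [one_apply, hij]

end IsSkewHadamard

theorem signature_of_skewHadamard_general (m : ℕ) (hm : 2 < m) (hme : Even m)
    (C : Matrix (Fin m) (Fin m) ℝ)
    (hH : IsSkewHadamard (C + 1))
    (S : Matrix (Fin m) (Fin m) ℂ)
    (hS : S = Complex.I • C.map ((↑) : ℝ → ℂ)) :
    (∃ F : Matrix (Fin (m / 2)) (Fin m) ℂ, IsSignatureOf S F) ∧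
      Sᴴ = S ∧ (∀ i, S i i = 0) ∧
      (∀ i j, i ≠ j → ‖S i j‖ = 1) ∧
      S ^ 2 = ((m : ℂ) - 1) • 1 := by
  subst hS
  have hherm := isHermitian_I_smul_map_ofReal hH.transpose_eq_neg
  have hdiag (i : Fin m) : (Complex.I • C.map ((↑) : ℝ → ℂ)) i i = 0 := by
    simp [hH.apply_self i]
  have hoff (i j : Fin m) (hij : i ≠ j) : ‖(Complex.I • C.map ((↑) : ℝ → ℂ)) i j‖ = 1 := by
    rcases hH.apply_eq_one_or_neg_one hij with h | h <;> simp [h]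
  have hsq := hH.I_smul_map_ofReal_mul_self
  rw [Fintype.card_fin] at hsq
  refine ⟨exists_isSignatureOf_of_mul_self_eq (by omega) ?_ hherm hdiag hoff (by simpa using hsq),
    hherm, hdiag, hoff, by rw [sq, hsq]⟩
  rw [Fintype.card_fin, Nat.two_mul_div_two_of_even hme]

/-- If `H = C + I` is a skew Hadamard matrix of even order `m > 2`, then `S = i·C`
(viewed as a complex matrix) is the signature matrix of some equiangular tight frame of
size `(m/2) × m`; equivalently, `S` is self-adjoint with zero diagonal and unimodular
off-diagonal entries, and `S² = (m−1)·I`. -/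
theorem signature_of_skewHadamard (m : ℕ) (hm : 2 < m) (hme : Even m)
    (C : Matrix (Fin m) (Fin m) ℝ) (hC : Cᵀ = -C)
    (hH : IsSkewHadamard (C + 1))
    (S : Matrix (Fin m) (Fin m) ℂ)
    (hS : S = Complex.I • C.map ((↑) : ℝ → ℂ)) :
    (∃ F : Matrix (Fin (m / 2)) (Fin m) ℂ, IsSignatureOf S F) ∧
      Sᴴ = S ∧ (∀ i, S i i = 0) ∧
      (∀ i j, i ≠ j → ‖S i j‖ = 1) ∧
      S ^ 2 = ((m : ℂ) - 1) • 1 :=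
  signature_of_skewHadamard_general m hm hme C hH S hS
end

section
/- (Strohmer/Renes via core adjacency) Let m > 2 and let H be a skew Hadamard matrix of order m whose first row consists entirely of ones (a normalized skew Hadamard), written in block form as [[1, 𝟙ᵀ], [−𝟙, A − Aᵀ + I]] where 𝟙 is the all-ones column vector of length m−1 and A is an (m−1)×(m−1) matrix with entries in {0,1} and zero diagonal. Set n = m−1 and α = −1/√m + i·√(1 − 1/m). Then S = α·A + ᾱ·Aᵀ is the signature matrix of a complex equiangular tight frame of size ((n−1)/2) × n; equivalently, S is self-adjoint with zero diagonal and unimodular off-diagonal entries and satisfies S² = (2/√(n+1))·S + (n−1)·I. -/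
open Matrix

/-!
Write `n = m - 1`, `C = A - Aᵀ` and `J` for the all-ones matrix. Orthogonality of the columns of
`H` says that `C` has zero column sums and `C² = J - n I`. Its `±1` entries make `A` a tournament,
`A + Aᵀ = J - I`, and together with the zero column sums they force `n` to be odd. Hence
`S = Re α • (J - I) + (i Im α) • C` lies in the commutative algebra spanned by `I`, `J`, `C`, where
`S² = (2/√(n+1)) S + (n-1) I` comes down to two scalar identities satisfied by `α`. With `μ` the
Welch bound for `d = (n-1)/2`, this quadratic equation says that `(d/n)(I + μ S)` is an orthogonal
projection. Its trace, hence its rank, is `d`, and factoring it as `VᴴV` with `VVᴴ = I` gives the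
frame `F = √(n/d) V`, whose signature matrix is `S`.
-/

open ComplexConjugate

theorem Matrix.conjTranspose_mul_self_submatrix_star {𝕜 ι κ : Type*} [RCLike 𝕜] [Fintype ι]
    [Fintype κ] [DecidableEq κ] (U : Matrix κ κ 𝕜) {p : κ → Prop} [DecidablePred p]
    (e : ι ≃ {i // p i}) :
    ((star U).submatrix (fun t => (e t).1) id)ᴴ * (star U).submatrix (fun t => (e t).1) id =
      U * diagonal (fun i => if p i then 1 else 0) * star U := by
  ext a b
  rw [conjTranspose_submatrix, star_eq_conjTranspose, conjTranspose_conjTranspose, mul_apply]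
  calc ∑ t, U a (e t).1 * star U (e t).1 b = ∑ i : {i // p i}, U a i * star U i b :=
        e.sum_comp fun i => U a i * star U i b
    _ = ∑ i with p i, U a i * star U i b := by
      rw [Finset.sum_subtype (p := p) _ (by simp)]
    _ = _ := by
      rw [Finset.sum_filter, mul_apply]
      simp [mul_diagonal]

theorem Matrix.IsHermitian.exists_conjTranspose_mul_self_eq_of_isIdempotentElem
    {𝕜 κ : Type*} [RCLike 𝕜] [Fintype κ] [DecidableEq κ] {P : Matrix κ κ 𝕜}
    (hP : P.IsHermitian) (hPP : IsIdempotentElem P) :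
    ∃ (k : ℕ) (V : Matrix (Fin k) κ 𝕜), Vᴴ * V = P ∧ V * Vᴴ = 1 := by
  have hev : ∀ i, hP.eigenvalues i = 0 ∨ hP.eigenvalues i = 1 := fun i =>
    hPP.spectrum_subset ℝ (hP.eigenvalues_mem_spectrum_real i)
  have hev' : (RCLike.ofReal ∘ hP.eigenvalues : κ → 𝕜) =
      fun i => if hP.eigenvalues i = 1 then 1 else 0 := by
    ext i
    rcases hev i with h | h <;> simp [h]
  let e := (Fintype.equivFin {i // hP.eigenvalues i = 1}).symm
  have he : Function.Injective fun t => (e t).1 := Subtype.val_injective.comp e.injective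
  refine ⟨_, (star (hP.eigenvectorUnitary : Matrix κ κ 𝕜)).submatrix (fun t => (e t).1) id,
    ?_, ?_⟩
  · rw [conjTranspose_mul_self_submatrix_star, ← hev']
    exact hP.spectral_theorem.symm
  · rw [conjTranspose_submatrix, star_eq_conjTranspose, conjTranspose_conjTranspose,
      ← submatrix_mul _ _ _ _ _ Function.bijective_id, ← star_eq_conjTranspose,
      Unitary.coe_star_mul_self, submatrix_one _ he]

theorem Matrix.IsHermitian.exists_conjTranspose_mul_self_eq_of_mul_self_eq_smul
    {𝕜 κ : Type*} [RCLike 𝕜] [Fintype κ] [DecidableEq κ] {G : Matrix κ κ 𝕜}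
    (hG : G.IsHermitian) {c : ℝ} (hc : 0 < c) (hGG : G * G = (c : 𝕜) • G) :
    ∃ (k : ℕ) (F : Matrix (Fin k) κ 𝕜), Fᴴ * F = G ∧ F * Fᴴ = (c : 𝕜) • 1 := by
  have hc0 : (c : 𝕜) ≠ 0 := RCLike.ofReal_ne_zero.mpr hc.ne'
  have hP : ((c : 𝕜)⁻¹ • G).IsHermitian := by
    simp [IsHermitian, conjTranspose_smul, hG.eq]
  have hPP : IsIdempotentElem ((c : 𝕜)⁻¹ • G) := by
    rw [IsIdempotentElem, smul_mul_smul_comm, hGG, smul_smul, mul_assoc, inv_mul_cancel₀ hc0,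
      mul_one]
  obtain ⟨k, V, hVP, hVV⟩ := hP.exists_conjTranspose_mul_self_eq_of_isIdempotentElem hPP
  have hsqrt : ((√c : ℝ) : 𝕜) * (√c : ℝ) = c := by exact_mod_cast Real.mul_self_sqrt hc.le
  refine ⟨k, ((√c : ℝ) : 𝕜) • V, ?_, ?_⟩
  · rw [conjTranspose_smul, Matrix.smul_mul, Matrix.mul_smul, smul_smul, hVP, RCLike.star_def,
      RCLike.conj_ofReal, hsqrt, smul_smul, mul_inv_cancel₀ hc0, one_smul]
  · rw [conjTranspose_smul, Matrix.smul_mul, Matrix.mul_smul, smul_smul, hVV, RCLike.star_def,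
      RCLike.conj_ofReal, hsqrt]

theorem etfMu_sq {d n : ℕ} (hdn : d < n) : etfMu d n ^ 2 = (n - d) / (d * (n - 1)) := by
  have : (d : ℝ) + 1 ≤ n := by exact_mod_cast hdn
  exact Real.sq_sqrt (div_nonneg (by linarith) (mul_nonneg d.cast_nonneg (by linarith)))

theorem etfMu_pos {d n : ℕ} (hd : 0 < d) (hdn : d < n) : 0 < etfMu d n := by
  have : (1 : ℝ) ≤ d := by exact_mod_cast hd
  have : (d : ℝ) + 1 ≤ n := by exact_mod_cast hdn
  exact Real.sqrt_pos.mpr (div_pos (by linarith) (mul_pos (by linarith) (by linarith)))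

theorem etfMu_two_mul_add_one (d : ℕ) : etfMu d (2 * d + 1) = √(2 * d + 2) / (2 * d) := by
  have h : (((2 * d + 1 : ℕ) : ℝ) - d) / (d * ((2 * d + 1 : ℕ) - 1)) =
      (2 * d + 2) / (2 * d) ^ 2 := by
    push_cast
    ring
  rw [etfMu, h, Real.sqrt_div' _ (sq_nonneg _), Real.sqrt_sq (by positivity)]

section EquiangularTightFrame

variable {ι κ : Type} [Fintype ι] [Fintype κ] [DecidableEq ι] [DecidableEq κ]

theorem isSignatureOf_of_conjTranspose_mul_self_eq {S : Matrix κ κ ℂ} {F : Matrix ι κ ℂ}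
    (hμ : 0 < etfMu (Fintype.card ι) (Fintype.card κ)) (hdiag : ∀ i, S i i = 0)
    (hoff : ∀ i j, i ≠ j → ‖S i j‖ = 1)
    (hgram : Fᴴ * F = 1 + (etfMu (Fintype.card ι) (Fintype.card κ) : ℂ) • S)
    (htight : F * Fᴴ = ((Fintype.card κ : ℂ) / Fintype.card ι) • 1) : IsSignatureOf S F := by
  refine ⟨⟨fun j => ?_, fun j k hjk => ?_, htight⟩, ?_⟩
  · simp [hgram, hdiag]
  · rw [hgram, Matrix.add_apply, one_apply_ne hjk, zero_add, Matrix.smul_apply, smul_eq_mul,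
      norm_mul, hoff j k hjk, Complex.norm_real, Real.norm_of_nonneg hμ.le, mul_one]
  · rw [hgram, add_sub_cancel_left, smul_smul, inv_mul_cancel₀ (by exact_mod_cast hμ.ne'),
      one_smul]

theorem one_add_etfMu_smul_mul_self_eq {d : ℕ} (hd : 0 < d) (hdn : d < Fintype.card κ)
    {S : Matrix κ κ ℂ}
    (hsq : S ^ 2 = ((((Fintype.card κ : ℝ) - 2 * d) / (d * etfMu d (Fintype.card κ)) : ℝ) : ℂ) • S
      + ((Fintype.card κ : ℂ) - 1) • 1) :
    (1 + (etfMu d (Fintype.card κ) : ℂ) • S) * (1 + (etfMu d (Fintype.card κ) : ℂ) • S) =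
      ((Fintype.card κ / d : ℝ) : ℂ) • (1 + (etfMu d (Fintype.card κ) : ℂ) • S) := by
  set n := Fintype.card κ
  set μ := etfMu d n
  have hμ : μ ≠ 0 := (etfMu_pos hd hdn).ne'
  have hd0 : (d : ℝ) ≠ 0 := by positivity
  have hn1 : (n : ℝ) - 1 ≠ 0 := by
    have : (1 : ℝ) ≤ d := by exact_mod_cast hd
    have : (d : ℝ) + 1 ≤ n := by exact_mod_cast hdn
    linarith
  have h1 : 1 + μ ^ 2 * (n - 1) = n / d := by
    rw [etfMu_sq hdn]
    field_simp
    ring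
  have h2 : 2 * μ + μ ^ 2 * ((n - 2 * d) / (d * μ)) = n / d * μ := by
    field_simp
    ring
  calc _ = 1 + (2 * μ : ℂ) • S + ((μ : ℂ) ^ 2) • S ^ 2 := by
        simp only [sq, add_mul, mul_add, one_mul, mul_one, smul_mul_assoc, mul_smul_comm]
        module
    _ = _ := by
        have h1' := congrArg ((↑) : ℝ → ℂ) h1
        have h2' := congrArg ((↑) : ℝ → ℂ) h2
        push_cast at h1' h2' ⊢
        rw [hsq]
        match_scalars
        · linear_combination h1'
        · linear_combination h2'

theorem exists_isSignatureOf_of_sq_eq {d : ℕ} (hd : 0 < d) (hdn : d < Fintype.card κ)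
    {S : Matrix κ κ ℂ} (hSH : Sᴴ = S) (hdiag : ∀ i, S i i = 0)
    (hoff : ∀ i j, i ≠ j → ‖S i j‖ = 1)
    (hsq : S ^ 2 = ((((Fintype.card κ : ℝ) - 2 * d) / (d * etfMu d (Fintype.card κ)) : ℝ) : ℂ) • S
      + ((Fintype.card κ : ℂ) - 1) • 1) :
    ∃ F : Matrix (Fin d) κ ℂ, IsSignatureOf S F := by
  have hG : (1 + (etfMu d (Fintype.card κ) : ℂ) • S).IsHermitian := by
    simp [IsHermitian, conjTranspose_smul, hSH]
  have hn : (0 : ℝ) < Fintype.card κ := by exact_mod_cast hd.trans hdn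
  have hd0 : (0 : ℝ) < d := by exact_mod_cast hd
  obtain ⟨k, F, hFG, hFF⟩ := hG.exists_conjTranspose_mul_self_eq_of_mul_self_eq_smul
    (div_pos hn hd0) (one_add_etfMu_smul_mul_self_eq hd hdn hsq)
  obtain rfl : k = d := by
    have htr : (k : ℂ) * (Fintype.card κ / d) = Fintype.card κ := by
      calc (k : ℂ) * (Fintype.card κ / d) = (F * Fᴴ).trace := by simp [hFF, mul_comm]
        _ = (Fᴴ * F).trace := trace_mul_comm _ _
        _ = Fintype.card κ := by simp [hFG, trace, hdiag]
    have hn' : (Fintype.card κ : ℂ) ≠ 0 := by exact_mod_cast hn.ne'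
    have hd0' : (d : ℂ) ≠ 0 := by exact_mod_cast hd0.ne'
    field_simp at htr
    exact_mod_cast htr
  refine ⟨F, isSignatureOf_of_conjTranspose_mul_self_eq ?_ hdiag hoff ?_ ?_⟩
  · simpa using etfMu_pos hd hdn
  · simpa using hFG
  · simpa using hFF

theorem exists_isSignatureOf_of_sq_eq_of_card_eq {d : ℕ} (hd : 0 < d)
    (hcard : Fintype.card κ = 2 * d + 1) {S : Matrix κ κ ℂ} (hSH : Sᴴ = S)
    (hdiag : ∀ i, S i i = 0) (hoff : ∀ i j, i ≠ j → ‖S i j‖ = 1)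
    (hsq : S ^ 2 = ((2 / √((Fintype.card κ : ℝ) + 1) : ℝ) : ℂ) • S
      + ((Fintype.card κ : ℂ) - 1) • 1) :
    ∃ F : Matrix (Fin d) κ ℂ, IsSignatureOf S F := by
  have hcoeff : (((2 * d + 1 : ℕ) : ℝ) - 2 * d) / (d * etfMu d (2 * d + 1)) =
      2 / √(((2 * d + 1 : ℕ) : ℝ) + 1) := by
    have : (0 : ℝ) < d := by exact_mod_cast hd
    rw [etfMu_two_mul_add_one]
    push_cast
    field_simp
    ring_nf
  refine exists_isSignatureOf_of_sq_eq hd (by omega) hSH hdiag hoff ?_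
  rw [hcard] at hsq ⊢
  rwa [hcoeff]

end EquiangularTightFrame

theorem Finset.even_card_of_sum_eq_zero {ι R : Type*} [Ring R] [CharZero R] {s : Finset ι}
    {f : ι → R} (hf : ∀ i ∈ s, f i = 1 ∨ f i = -1) (hsum : ∑ i ∈ s, f i = 0) :
    Even s.card := by
  classical
  have hterm : ∀ i ∈ s, f i + 1 = 2 * if f i = 1 then 1 else 0 := fun i hi => by
    rcases hf i hi with h | h <;>
      simp [h, one_add_one_eq_two, neg_one_eq_one_iff, ringChar.eq_zero]
  have h : ((s.card : ℕ) : R) = ((2 * (s.filter (f · = 1)).card : ℕ) : R) := by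
    rw [Nat.cast_mul, Nat.cast_ofNat, ← Finset.sum_boole, Finset.mul_sum,
      ← Finset.sum_congr rfl hterm, Finset.sum_add_distrib, hsum]
    simp
  exact ⟨_, (Nat.cast_injective h).trans (two_mul _)⟩

section NormalizedSkewHadamard

variable {κ : Type} [Fintype κ] [DecidableEq κ] {C : Matrix κ κ ℝ}

theorem sum_apply_eq_zero_of_isHadamard_fromBlocks
    (hH : _root_.IsHadamard (fromBlocks (1 : Matrix Unit Unit ℝ) (of fun _ _ => (1 : ℝ))
      (of fun _ _ => (-1 : ℝ)) (C + 1))) (j : κ) :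
    ∑ i, C i j = 0 := by
  have h := hH.2
  rw [fromBlocks_transpose, fromBlocks_multiply, ← fromBlocks_one, fromBlocks_smul,
    fromBlocks_inj] at h
  simpa [mul_apply, Finset.sum_add_distrib, one_apply] using congrFun (congrFun h.2.1 ()) j

theorem mul_self_eq_of_isHadamard_fromBlocks (hC : Cᵀ = -C)
    (hH : _root_.IsHadamard (fromBlocks (1 : Matrix Unit Unit ℝ) (of fun _ _ => (1 : ℝ))
      (of fun _ _ => (-1 : ℝ)) (C + 1))) :
    C * C = of (fun _ _ => 1) - (Fintype.card κ : ℝ) • 1 := by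
  have h := hH.2
  rw [fromBlocks_transpose, fromBlocks_multiply, ← fromBlocks_one, fromBlocks_smul,
    fromBlocks_inj] at h
  have hJ : (of fun _ _ => (1 : ℝ) : Matrix Unit κ ℝ)ᵀ * (of fun _ _ => (1 : ℝ) : Matrix Unit κ ℝ)
      = of fun _ _ => 1 := by
    ext
    simp [mul_apply]
  have h22 := h.2.2.2
  rw [hJ, transpose_add, hC, transpose_one, Fintype.card_sum, Fintype.card_unit,
    show (-C + 1) * (C + 1) = 1 - C * C by noncomm_ring] at h22
  push_cast at h22
  linear_combination (norm := module) -h22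

theorem apply_eq_one_or_neg_one_of_isHadamard_fromBlocks
    (hH : _root_.IsHadamard (fromBlocks (1 : Matrix Unit Unit ℝ) (of fun _ _ => (1 : ℝ))
      (of fun _ _ => (-1 : ℝ)) (C + 1))) {i j : κ} (hij : i ≠ j) :
    C i j = 1 ∨ C i j = -1 := by
  simpa [one_apply_ne hij] using hH.1 (Sum.inr i) (Sum.inr j)

theorem even_card_sub_one_of_isHadamard_fromBlocks [Nonempty κ] (hC : Cᵀ = -C)
    (hH : _root_.IsHadamard (fromBlocks (1 : Matrix Unit Unit ℝ) (of fun _ _ => (1 : ℝ))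
      (of fun _ _ => (-1 : ℝ)) (C + 1))) :
    Even (Fintype.card κ - 1) := by
  obtain ⟨j⟩ := ‹Nonempty κ›
  have hjj : C j j = 0 := by
    have := congrFun (congrFun hC j) j
    simp only [transpose_apply, Matrix.neg_apply] at this
    linarith
  rw [← Finset.card_univ, ← Finset.card_erase_of_mem (Finset.mem_univ j)]
  refine Finset.even_card_of_sum_eq_zero (f := fun i => C i j)
    (fun i hi => apply_eq_one_or_neg_one_of_isHadamard_fromBlocks hH (Finset.ne_of_mem_erase hi))
    ?_
  rw [Finset.sum_erase (f := fun i => C i j) _ hjj, sum_apply_eq_zero_of_isHadamard_fromBlocks hH]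

end NormalizedSkewHadamard

theorem sq_smul_sub_one_add_smul_eq {κ R : Type*} [Fintype κ] [DecidableEq κ] [CommRing R]
    {C : Matrix κ κ R} (hC : Cᵀ = -C) (hcol : ∀ j, ∑ i, C i j = 0)
    (hCC : C * C = of (fun _ _ => 1) - (Fintype.card κ : R) • 1)
    {p q : R} (hp : (Fintype.card κ + 1) * p ^ 2 = 1) (hq : q ^ 2 = -Fintype.card κ * p ^ 2) :
    (p • (of (fun _ _ => 1) - 1) + q • C) ^ 2 =
      (-2 * p) • (p • (of (fun _ _ => 1) - 1) + q • C) + ((Fintype.card κ : R) - 1) • 1 := by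
  set J : Matrix κ κ R := of fun _ _ => 1
  have hJJ : J * J = (Fintype.card κ : R) • J := by ext; simp [J, mul_apply]
  have hJC : J * C = 0 := by ext i j; simp [J, mul_apply, hcol]
  have hCJ : C * J = 0 := by
    ext i j
    have h k : C i k = -C k i := congrFun (congrFun hC k) i
    simp [J, mul_apply, h, hcol]
  rw [sq]
  simp only [add_mul, mul_add, sub_mul, mul_sub, smul_mul_assoc, mul_smul_comm,
    hJJ, hJC, hCJ, hCC, one_mul, mul_one]
  match_scalars
  · linear_combination hq
  · linear_combination (Fintype.card κ - 1 : R) * hp - (Fintype.card κ : R) * hq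
  · ring

theorem add_transpose_eq_of_sub_transpose_apply {κ : Type*} [DecidableEq κ] {A : Matrix κ κ ℝ}
    (hA01 : ∀ i j, A i j = 0 ∨ A i j = 1) (hAdiag : ∀ i, A i i = 0)
    (hpm : ∀ i j, i ≠ j → (A - Aᵀ) i j = 1 ∨ (A - Aᵀ) i j = -1) :
    A + Aᵀ = of (fun _ _ => 1) - 1 := by
  ext i j
  by_cases hij : i = j
  · subst hij
    simp [hAdiag]
  · have := hpm i j hij
    simp only [Matrix.add_apply, Matrix.sub_apply, transpose_apply, of_apply, one_apply_ne hij,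
      sub_zero] at this ⊢
    rcases hA01 i j with h | h <;> rcases hA01 j i with h' | h' <;>
      rcases this with h'' | h'' <;> linarith

theorem smul_map_add_conj_smul_transpose_map_eq {κ : Type*} (α : ℂ) (A : Matrix κ κ ℝ) :
    α • A.map ((↑) : ℝ → ℂ) + conj α • Aᵀ.map ((↑) : ℝ → ℂ) =
      (α.re : ℂ) • (A + Aᵀ).map ((↑) : ℝ → ℂ) +
        (Complex.I * α.im) • (A - Aᵀ).map ((↑) : ℝ → ℂ) := by
  ext i j
  simp only [Matrix.add_apply, Matrix.sub_apply, Matrix.smul_apply, map_apply, transpose_apply,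
    smul_eq_mul, Complex.ofReal_add, Complex.ofReal_sub]
  linear_combination (norm := (push_cast; ring)) ((A i j + A j i : ℂ) / 2) * Complex.add_conj α +
    ((A i j - A j i : ℂ) / 2) * Complex.sub_conj α

theorem conjTranspose_smul_map_add_conj_smul_transpose_map {κ : Type*} (α : ℂ)
    (A : Matrix κ κ ℝ) :
    (α • A.map ((↑) : ℝ → ℂ) + conj α • Aᵀ.map ((↑) : ℝ → ℂ))ᴴ =
      α • A.map ((↑) : ℝ → ℂ) + conj α • Aᵀ.map ((↑) : ℝ → ℂ) := by
  ext i j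
  simp [add_comm]

theorem smul_map_add_conj_smul_transpose_map_apply_self {κ : Type*} (α : ℂ) {A : Matrix κ κ ℝ}
    {i : κ} (hA : A i i = 0) :
    (α • A.map ((↑) : ℝ → ℂ) + conj α • Aᵀ.map ((↑) : ℝ → ℂ)) i i = 0 := by
  simp [hA]

theorem norm_smul_map_add_conj_smul_transpose_map_apply {κ : Type*} [DecidableEq κ] {α : ℂ}
    (hα : ‖α‖ = 1) {A : Matrix κ κ ℝ} (hA01 : ∀ i j, A i j = 0 ∨ A i j = 1)
    (hA : A + Aᵀ = of (fun _ _ => 1) - 1) {i j : κ} (hij : i ≠ j) :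
    ‖(α • A.map ((↑) : ℝ → ℂ) + conj α • Aᵀ.map ((↑) : ℝ → ℂ)) i j‖ = 1 := by
  have h := congrFun (congrFun hA i) j
  simp only [Matrix.add_apply, transpose_apply, Matrix.sub_apply, of_apply, one_apply_ne hij] at h
  rcases hA01 i j with h' | h' <;> simp [h', show A j i = 1 - A i j by linarith, hα]

theorem add_one_mul_re_sq_eq_one_and_im_sq_eq {n : ℝ} (hn : 0 ≤ n) {α : ℂ}
    (hα : α = -((1 / √(n + 1) : ℝ) : ℂ) + Complex.I * ((√(1 - 1 / (n + 1)) : ℝ) : ℂ)) :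
    (n + 1) * α.re ^ 2 = 1 ∧ α.im ^ 2 = n * α.re ^ 2 := by
  have hn1 : (0 : ℝ) < n + 1 := by linarith
  have hre : α.re ^ 2 = 1 / (n + 1) := by
    rw [hα]
    simp [Real.sq_sqrt hn1.le]
  have him : α.im ^ 2 = 1 - 1 / (n + 1) := by
    have : (0 : ℝ) ≤ 1 - 1 / (n + 1) := by
      rw [sub_nonneg, div_le_one hn1]
      linarith
    rw [hα]
    simpa using Real.sq_sqrt this
  rw [hre, him]
  constructor
  · field_simp
  · field_simp
    ring

section CoreAdjacency

variable {κ : Type} [Fintype κ] [DecidableEq κ] {A : Matrix κ κ ℝ}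

theorem add_transpose_eq_of_isHadamard_fromBlocks (hA01 : ∀ i j, A i j = 0 ∨ A i j = 1)
    (hAdiag : ∀ i, A i i = 0)
    (hH : _root_.IsHadamard (fromBlocks (1 : Matrix Unit Unit ℝ) (of fun _ _ => (1 : ℝ))
      (of fun _ _ => (-1 : ℝ)) (A - Aᵀ + 1))) :
    A + Aᵀ = of (fun _ _ => 1) - 1 :=
  add_transpose_eq_of_sub_transpose_apply hA01 hAdiag fun _ _ =>
    apply_eq_one_or_neg_one_of_isHadamard_fromBlocks hH

theorem sq_eq_of_isHadamard_fromBlocks (hA01 : ∀ i j, A i j = 0 ∨ A i j = 1)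
    (hAdiag : ∀ i, A i i = 0)
    (hH : _root_.IsHadamard (fromBlocks (1 : Matrix Unit Unit ℝ) (of fun _ _ => (1 : ℝ))
      (of fun _ _ => (-1 : ℝ)) (A - Aᵀ + 1)))
    {α : ℂ} (hre : ((Fintype.card κ : ℝ) + 1) * α.re ^ 2 = 1)
    (him : α.im ^ 2 = Fintype.card κ * α.re ^ 2) :
    (α • A.map ((↑) : ℝ → ℂ) + conj α • Aᵀ.map ((↑) : ℝ → ℂ)) ^ 2 =
      ((-2 * α.re : ℝ) : ℂ) • (α • A.map ((↑) : ℝ → ℂ) + conj α • Aᵀ.map ((↑) : ℝ → ℂ)) +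
        ((Fintype.card κ : ℂ) - 1) • 1 := by
  have hC : (A - Aᵀ)ᵀ = -(A - Aᵀ) := by rw [transpose_sub, transpose_transpose, neg_sub]
  have hJ : (of (fun _ _ => (1 : ℝ)) - 1 : Matrix κ κ ℝ).map ((↑) : ℝ → ℂ) =
      of (fun _ _ => 1) - 1 := by
    ext i j
    by_cases hij : i = j <;> simp [hij]
  rw [smul_map_add_conj_smul_transpose_map_eq,
    add_transpose_eq_of_isHadamard_fromBlocks hA01 hAdiag hH, hJ, Complex.ofReal_mul,
    Complex.ofReal_neg, Complex.ofReal_ofNat]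
  refine sq_smul_sub_one_add_smul_eq (R := ℂ) (C := (A - Aᵀ).map ((↑) : ℝ → ℂ)) ?_ (fun j => ?_)
    ?_ (by exact_mod_cast hre) ?_
  · rw [← transpose_map, hC, Matrix.map_neg _ Complex.ofReal_neg]
  · simp only [map_apply]
    exact_mod_cast sum_apply_eq_zero_of_isHadamard_fromBlocks hH j
  · calc _ = ((A - Aᵀ) * (A - Aᵀ)).map ((↑) : ℝ → ℂ) :=
          (Matrix.map_mul (f := Complex.ofRealHom)).symm
      _ = _ := by
        rw [mul_self_eq_of_isHadamard_fromBlocks hC hH]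
        ext i j
        by_cases hij : i = j <;> simp [hij]
  · have him' := congrArg ((↑) : ℝ → ℂ) him
    push_cast at him'
    rw [mul_pow, Complex.I_sq]
    linear_combination -him'

theorem exists_isSignatureOf_of_isHadamard_fromBlocks (hκ : 1 < Fintype.card κ)
    (hA01 : ∀ i j, A i j = 0 ∨ A i j = 1) (hAdiag : ∀ i, A i i = 0)
    (hH : _root_.IsHadamard (fromBlocks (1 : Matrix Unit Unit ℝ) (of fun _ _ => (1 : ℝ))
      (of fun _ _ => (-1 : ℝ)) (A - Aᵀ + 1)))
    {α : ℂ} (hα : α = -((1 / √((Fintype.card κ : ℝ) + 1) : ℝ) : ℂ) +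
      Complex.I * ((√(1 - 1 / ((Fintype.card κ : ℝ) + 1)) : ℝ) : ℂ))
    {S : Matrix κ κ ℂ} (hS : S = α • A.map ((↑) : ℝ → ℂ) + conj α • Aᵀ.map ((↑) : ℝ → ℂ)) :
    (∃ F : Matrix (Fin ((Fintype.card κ - 1) / 2)) κ ℂ, IsSignatureOf S F) ∧
      Sᴴ = S ∧ (∀ i, S i i = 0) ∧ (∀ i j, i ≠ j → ‖S i j‖ = 1) ∧
      S ^ 2 = ((2 / √((Fintype.card κ : ℝ) + 1) : ℝ) : ℂ) • S +
        ((Fintype.card κ : ℂ) - 1) • 1 := by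
  obtain ⟨hre, him⟩ := add_one_mul_re_sq_eq_one_and_im_sq_eq (Nat.cast_nonneg _) hα
  have hα1 : ‖α‖ = 1 := by
    rw [← sq_eq_sq₀ (norm_nonneg α) zero_le_one, ← Complex.normSq_eq_norm_sq,
      Complex.normSq_apply]
    linear_combination hre + him
  have hSH : Sᴴ = S := hS ▸ conjTranspose_smul_map_add_conj_smul_transpose_map α A
  have hdiag : ∀ i, S i i = 0 := fun i =>
    hS ▸ smul_map_add_conj_smul_transpose_map_apply_self α (hAdiag i)
  have hoff : ∀ i j, i ≠ j → ‖S i j‖ = 1 := fun i j hij =>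
    hS ▸ norm_smul_map_add_conj_smul_transpose_map_apply hα1 hA01
      (add_transpose_eq_of_isHadamard_fromBlocks hA01 hAdiag hH) hij
  have hsq : S ^ 2 = ((2 / √((Fintype.card κ : ℝ) + 1) : ℝ) : ℂ) • S +
      ((Fintype.card κ : ℂ) - 1) • 1 := by
    rw [hS, sq_eq_of_isHadamard_fromBlocks hA01 hAdiag hH hre him, hα]
    congr 3
    simp only [Complex.add_re, Complex.neg_re, Complex.ofReal_re, Complex.mul_re, Complex.I_re,
      Complex.I_im, Complex.ofReal_im]
    ring
  have : Nonempty κ := Fintype.card_pos_iff.mp (by omega)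
  obtain ⟨d, hd⟩ := even_card_sub_one_of_isHadamard_fromBlocks
    (by rw [transpose_sub, transpose_transpose, neg_sub]) hH
  exact ⟨exists_isSignatureOf_of_sq_eq_of_card_eq (by omega) (by omega) hSH hdiag hoff hsq,
    hSH, hdiag, hoff, hsq⟩

end CoreAdjacency

/-- **Strohmer/Renes via core adjacency.** Let `m > 2` and let
`H = [[1, 𝟙ᵀ], [−𝟙, A − Aᵀ + I]]` be a normalized skew Hadamard matrix of order `m`, where
`A` is a `(0,1)`-matrix of order `m − 1` with zero diagonal. With `n = m − 1` and
`α = −1/√m + i·√(1 − 1/m)`, the matrix `S = α·A + ᾱ·Aᵀ` is the signature matrix of a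
complex ETF of size `((n−1)/2) × n`; equivalently, `S` is self-adjoint with zero diagonal
and unimodular off-diagonal entries and satisfies `S² = (2/√(n+1))·S + (n−1)·I`. -/
theorem strohmer_renes (m : ℕ) (hm : 2 < m)
    (A : Matrix (Fin (m - 1)) (Fin (m - 1)) ℝ)
    (hA01 : ∀ i j, A i j = 0 ∨ A i j = 1) (hAdiag : ∀ i, A i i = 0)
    (hH : IsSkewHadamard
      (Matrix.fromBlocks (1 : Matrix Unit Unit ℝ) (Matrix.of fun _ _ => (1 : ℝ))
        (Matrix.of fun _ _ => (-1 : ℝ)) (A - Aᵀ + 1)))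
    (α : ℂ) (hα : α = -((1 / Real.sqrt m : ℝ) : ℂ) +
      Complex.I * ((Real.sqrt (1 - 1 / (m : ℝ)) : ℝ) : ℂ))
    (S : Matrix (Fin (m - 1)) (Fin (m - 1)) ℂ)
    (hS : S = α • A.map ((↑) : ℝ → ℂ) + (starRingEnd ℂ α) • (Aᵀ).map ((↑) : ℝ → ℂ)) :
    (∃ F : Matrix (Fin ((m - 2) / 2)) (Fin (m - 1)) ℂ, IsSignatureOf S F) ∧
      Sᴴ = S ∧ (∀ i, S i i = 0) ∧
      (∀ i j, i ≠ j → ‖S i j‖ = 1) ∧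
      S ^ 2 = (((2 / Real.sqrt (((m : ℝ) - 1) + 1) : ℝ)) : ℂ) • S +
        (((m : ℂ) - 1) - 1) • 1 := by
  have hn : ((m - 1 : ℕ) : ℝ) + 1 = m := by
    rw [Nat.cast_sub (by omega)]
    ring
  obtain ⟨hF, hSH, hdiag, hoff, hsq⟩ := exists_isSignatureOf_of_isHadamard_fromBlocks
    (by rw [Fintype.card_fin]; omega) hA01 hAdiag hH.1 (by rwa [Fintype.card_fin, hn]) hS
  rw [Fintype.card_fin, Nat.sub_sub] at hF
  refine ⟨hF, hSH, hdiag, hoff, ?_⟩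
  rw [hsq, Fintype.card_fin, hn, sub_add_cancel, Nat.cast_sub (by omega), Nat.cast_one]
end
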